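/- The topological entropy of X(𝔸) exists and dominates the block lower bounds: the limit H₀ := lim_{k→∞} (log₂ |X_{Λ_k}|)/k² exists, and for every n, m ≥ 1 it satisfies H₀ ≥ (log₂ |M_{Λ_{n,m}}|)/((n+1)(m+1)). -/

import Mathlib

/-- Adjacency in the triangular lattice, modeled on `ℤ × ℤ`. -/
def TriAdj (u v : ℤ × ℤ) : Prop :=
  (u.1 - v.1, u.2 - v.2) ∈
    ({(1, 0), (-1, 0), (0, 1), (0, -1), (1, -1), (-1, 1)} : Finset (ℤ × ℤ))

/-- A set of sites is independent if no two of its elements are adjacent. -/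
def IsIndependent (S : Set (ℤ × ℤ)) : Prop :=
  ∀ u ∈ S, ∀ v ∈ S, ¬ TriAdj u v

/-- Maximal independent set of the triangular lattice. -/
def IsMIS (S : Set (ℤ × ℤ)) : Prop :=
  IsIndependent S ∧ ∀ u ∉ S, ∃ v ∈ S, TriAdj u v

/-- The box `{a,…,b} × {c,…,d} ⊆ ℤ²`. -/
def Box (a b c d : ℤ) : Set (ℤ × ℤ) :=
  {p | a ≤ p.1 ∧ p.1 ≤ b ∧ c ≤ p.2 ∧ p.2 ≤ d}

/-- The rectangle `Λ_{n,m} = {1,…,n} × {1,…,m}`. -/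
def Rect (n m : ℤ) : Set (ℤ × ℤ) := Box 1 n 1 m

/-- `T` is a maximal configuration on the region `Λ`: `T ⊆ Λ`, `T` is
independent, and every site of `Λ \ T` has a neighbor in `T`. -/
def IsMaxConfig (Λ T : Set (ℤ × ℤ)) : Prop :=
  T ⊆ Λ ∧ IsIndependent T ∧ ∀ u ∈ Λ \ T, ∃ v ∈ T, TriAdj u v

/-- `T` is a compatible configuration on the region `Λ`: it is the restriction
to `Λ` of some maximal independent set of the whole lattice. -/
def IsCompatConfig (Λ T : Set (ℤ × ℤ)) : Prop :=
  ∃ S : Set (ℤ × ℤ), IsMIS S ∧ S ∩ Λ = T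

/-- The set of maximal configurations on the region `Λ`. -/
def MaxConfigs (Λ : Set (ℤ × ℤ)) : Set (Set (ℤ × ℤ)) := {T | IsMaxConfig Λ T}

/-- The set of compatible configurations on the region `Λ`. -/
def CompatConfigs (Λ : Set (ℤ × ℤ)) : Set (Set (ℤ × ℤ)) := {T | IsCompatConfig Λ T}

/-!
Counting compatible configurations is submultiplicative: a compatible configuration on
`Λ₁ ∪ Λ₂` is determined by its restrictions to `Λ₁` and `Λ₂`, which are again compatible.
Covering `Λ_j` by `⌈j/n⌉²` translates of `Λ_n` gives
`log₂ |X_{Λ_j}| / j² ≤ (1 + n/j)² · log₂ |X_{Λ_n}| / n²`, so the limsup is at most every term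
and the sequence converges to its infimum.

For the lower bound, place translates of `Λ_{n,m}` on a grid of stride `(n + 1, m + 1)`: they
are pairwise non-adjacent, so any choice of maximal configurations on them is independent,
extends (Zorn) to a maximal independent set of the lattice, and is recovered from its
restriction to the big square. Along `k = t (n + 1) (m + 1)` this packs
`|M_{Λ_{n,m}}| ^ (t² (n + 1) (m + 1))` compatible configurations into `Λ_k`.
-/

open Filter Topology Pointwise

lemma triAdj_iff {u v : ℤ × ℤ} : TriAdj u v ↔
    (u.1 - v.1 = 1 ∧ u.2 - v.2 = 0) ∨ (u.1 - v.1 = -1 ∧ u.2 - v.2 = 0) ∨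
    (u.1 - v.1 = 0 ∧ u.2 - v.2 = 1) ∨ (u.1 - v.1 = 0 ∧ u.2 - v.2 = -1) ∨
    (u.1 - v.1 = 1 ∧ u.2 - v.2 = -1) ∨ (u.1 - v.1 = -1 ∧ u.2 - v.2 = 1) := by
  simp [TriAdj, Prod.ext_iff]

lemma TriAdj.symm {u v : ℤ × ℤ} (h : TriAdj u v) : TriAdj v u := by
  rw [triAdj_iff] at h ⊢; omega

lemma triAdj_irrefl (u : ℤ × ℤ) : ¬ TriAdj u u := by
  rw [triAdj_iff]; omega

lemma TriAdj.coord_close {u v : ℤ × ℤ} (h : TriAdj u v) :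
    u.1 ≤ v.1 + 1 ∧ v.1 ≤ u.1 + 1 ∧ u.2 ≤ v.2 + 1 ∧ v.2 ≤ u.2 + 1 := by
  rw [triAdj_iff] at h; omega

@[simp]
lemma triAdj_add_left (t u v : ℤ × ℤ) : TriAdj (t + u) (t + v) ↔ TriAdj u v := by
  simp [TriAdj]

section Translation

variable (t : ℤ × ℤ) {Λ S T : Set (ℤ × ℤ)}

lemma IsIndependent.vadd (hS : IsIndependent S) : IsIndependent (t +ᵥ S) := by
  rintro _ ⟨u, hu, rfl⟩ _ ⟨v, hv, rfl⟩
  simpa using hS u hu v hv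

lemma IsMIS.vadd (hS : IsMIS S) : IsMIS (t +ᵥ S) := by
  refine ⟨hS.1.vadd t, fun u hu => ?_⟩
  obtain ⟨v, hv, huv⟩ := hS.2 (-t +ᵥ u) (by rwa [← Set.mem_vadd_set_iff_neg_vadd_mem])
  exact ⟨t +ᵥ v, Set.vadd_mem_vadd_set hv, by simpa using (triAdj_add_left t _ _).2 huv⟩

lemma IsMaxConfig.vadd (hT : IsMaxConfig Λ T) : IsMaxConfig (t +ᵥ Λ) (t +ᵥ T) := by
  refine ⟨Set.vadd_set_mono hT.1, hT.2.1.vadd t, fun u hu => ?_⟩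
  rw [← Set.vadd_set_sdiff, Set.mem_vadd_set_iff_neg_vadd_mem] at hu
  obtain ⟨v, hv, huv⟩ := hT.2.2 _ hu
  exact ⟨t +ᵥ v, Set.vadd_mem_vadd_set hv, by simpa using (triAdj_add_left t _ _).2 huv⟩

lemma vadd_compatConfigs_subset : t +ᵥ CompatConfigs Λ ⊆ CompatConfigs (t +ᵥ Λ) := by
  rintro _ ⟨_, ⟨S, hS, rfl⟩, rfl⟩
  exact ⟨t +ᵥ S, hS.vadd t, (Set.vadd_set_inter).symm⟩

lemma vadd_maxConfigs_subset : t +ᵥ MaxConfigs Λ ⊆ MaxConfigs (t +ᵥ Λ) := by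
  rintro _ ⟨T, hT, rfl⟩
  exact hT.vadd t

end Translation

lemma vadd_eq_of_vadd_subset {F : Set (ℤ × ℤ) → Set (Set (ℤ × ℤ))}
    (hF : ∀ (t : ℤ × ℤ) Λ, t +ᵥ F Λ ⊆ F (t +ᵥ Λ)) (t : ℤ × ℤ) (Λ : Set (ℤ × ℤ)) :
    F (t +ᵥ Λ) = t +ᵥ F Λ := by
  refine Set.Subset.antisymm ?_ (hF t Λ)
  rw [Set.subset_vadd_set_iff]
  simpa using hF (-t) (t +ᵥ Λ)

lemma compatConfigs_vadd (t : ℤ × ℤ) (Λ : Set (ℤ × ℤ)) :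
    CompatConfigs (t +ᵥ Λ) = t +ᵥ CompatConfigs Λ :=
  vadd_eq_of_vadd_subset vadd_compatConfigs_subset t Λ

lemma maxConfigs_vadd (t : ℤ × ℤ) (Λ : Set (ℤ × ℤ)) :
    MaxConfigs (t +ᵥ Λ) = t +ᵥ MaxConfigs Λ :=
  vadd_eq_of_vadd_subset vadd_maxConfigs_subset t Λ

lemma exists_isMaxConfig_superset {U Λ : Set (ℤ × ℤ)} (hUΛ : U ⊆ Λ) (hU : IsIndependent U) :
    ∃ T, U ⊆ T ∧ IsMaxConfig Λ T := by
  let 𝒮 : Set (Set (ℤ × ℤ)) := {T | T ⊆ Λ ∧ IsIndependent T}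
  have hchain : ∀ c ⊆ 𝒮, IsChain (· ⊆ ·) c → c.Nonempty → ∃ ub ∈ 𝒮, ∀ s ∈ c, s ⊆ ub := by
    intro c hc hc_chain _
    refine ⟨⋃₀ c, ⟨Set.sUnion_subset fun s hs => (hc hs).1, ?_⟩,
      fun s hs => Set.subset_sUnion_of_mem hs⟩
    rintro u ⟨s, hs, hu⟩ v ⟨s', hs', hv⟩
    rcases hc_chain.total hs hs' with h | h
    · exact (hc hs').2 u (h hu) v hv
    · exact (hc hs).2 u hu v (h hv)
  obtain ⟨T, hUT, ⟨hTΛ, hT⟩, hmax⟩ := zorn_subset_nonempty 𝒮 hchain U ⟨hUΛ, hU⟩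
  refine ⟨T, hUT, hTΛ, hT, fun u ⟨huΛ, huT⟩ => ?_⟩
  by_contra! hfar
  have hins : insert u T ∈ 𝒮 := by
    refine ⟨Set.insert_subset huΛ hTΛ, ?_⟩
    rintro a (rfl | ha) b (rfl | hb)
    · exact triAdj_irrefl _
    · exact hfar _ hb
    · exact fun h => hfar _ ha h.symm
    · exact hT a ha b hb
  exact huT (hmax hins (Set.subset_insert u T) (Set.mem_insert u T))

lemma isMIS_iff_isMaxConfig_univ {S : Set (ℤ × ℤ)} : IsMIS S ↔ IsMaxConfig Set.univ S := by
  simp [IsMIS, IsMaxConfig]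

lemma IsIndependent.exists_isMIS_superset {U : Set (ℤ × ℤ)} (hU : IsIndependent U) :
    ∃ S, U ⊆ S ∧ IsMIS S := by
  simpa only [isMIS_iff_isMaxConfig_univ] using
    exists_isMaxConfig_superset (Set.subset_univ U) hU

lemma isIndependent_empty : IsIndependent ∅ := by
  simp [IsIndependent]

lemma compatConfigs_nonempty (Λ : Set (ℤ × ℤ)) : (CompatConfigs Λ).Nonempty := by
  obtain ⟨S, -, hS⟩ := isIndependent_empty.exists_isMIS_superset
  exact ⟨S ∩ Λ, S, hS, rfl⟩

lemma maxConfigs_nonempty (Λ : Set (ℤ × ℤ)) : (MaxConfigs Λ).Nonempty := by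
  obtain ⟨T, -, hT⟩ := exists_isMaxConfig_superset (Set.empty_subset Λ) isIndependent_empty
  exact ⟨T, hT⟩

lemma compatConfigs_finite {Λ : Set (ℤ × ℤ)} (hΛ : Λ.Finite) : (CompatConfigs Λ).Finite :=
  hΛ.finite_subsets.subset fun _ ⟨_, _, hST⟩ => hST ▸ Set.inter_subset_right

lemma maxConfigs_finite {Λ : Set (ℤ × ℤ)} (hΛ : Λ.Finite) : (MaxConfigs Λ).Finite :=
  hΛ.finite_subsets.subset fun _ hT => hT.1

lemma rect_finite (n m : ℤ) : (Rect n m).Finite :=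
  ((Set.finite_Icc 1 n).prod (Set.finite_Icc 1 m)).subset
    fun _ ⟨h₁, h₂, h₃, h₄⟩ => ⟨⟨h₁, h₂⟩, h₃, h₄⟩

lemma inter_mem_compatConfigs {Λ Λ' T : Set (ℤ × ℤ)} (hT : T ∈ CompatConfigs Λ') (hΛ : Λ ⊆ Λ') :
    T ∩ Λ ∈ CompatConfigs Λ := by
  obtain ⟨S, hS, rfl⟩ := hT
  exact ⟨S, hS, by rw [Set.inter_assoc, Set.inter_eq_right.2 hΛ]⟩

lemma ncard_compatConfigs_mono {Λ Λ' : Set (ℤ × ℤ)} (hΛ : Λ ⊆ Λ') (hΛ' : Λ'.Finite) :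
    (CompatConfigs Λ).ncard ≤ (CompatConfigs Λ').ncard := by
  have hsurj : CompatConfigs Λ ⊆ (· ∩ Λ) '' CompatConfigs Λ' := by
    rintro _ ⟨S, hS, rfl⟩
    exact ⟨S ∩ Λ', ⟨S, hS, rfl⟩, by simp only [Set.inter_assoc, Set.inter_eq_right.2 hΛ]⟩
  exact (Set.ncard_le_ncard hsurj ((compatConfigs_finite hΛ').image _)).trans
    (Set.ncard_image_le (compatConfigs_finite hΛ'))

lemma ncard_compatConfigs_union_le {Λ₁ Λ₂ : Set (ℤ × ℤ)} (h₁ : Λ₁.Finite) (h₂ : Λ₂.Finite) :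
    (CompatConfigs (Λ₁ ∪ Λ₂)).ncard ≤ (CompatConfigs Λ₁).ncard * (CompatConfigs Λ₂).ncard := by
  rw [← Set.ncard_prod]
  refine Set.ncard_le_ncard_of_injOn (fun T => (T ∩ Λ₁, T ∩ Λ₂))
    (fun T hT => ⟨inter_mem_compatConfigs hT Set.subset_union_left,
      inter_mem_compatConfigs hT Set.subset_union_right⟩) ?_
    ((compatConfigs_finite h₁).prod (compatConfigs_finite h₂))
  rintro T ⟨S, -, rfl⟩ T' ⟨S', -, rfl⟩ h
  simp only [Prod.ext_iff, Set.inter_assoc, Set.union_inter_cancel_left,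
    Set.union_inter_cancel_right] at h
  rw [Set.inter_union_distrib_left, Set.inter_union_distrib_left, h.1, h.2]

lemma ncard_compatConfigs_biUnion_le {ι : Type*} (s : Finset ι) {Λ : ι → Set (ℤ × ℤ)}
    (hΛ : ∀ i ∈ s, (Λ i).Finite) :
    (CompatConfigs (⋃ i ∈ s, Λ i)).ncard ≤ ∏ i ∈ s, (CompatConfigs (Λ i)).ncard := by
  classical
  induction s using Finset.induction_on with
  | empty =>
    simp only [Finset.notMem_empty, Set.iUnion_of_empty, Set.iUnion_empty, Finset.prod_empty]
    refine (Set.ncard_le_ncard (t := {∅}) ?_).trans (Set.ncard_singleton _).le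
    rintro _ ⟨S, -, rfl⟩
    exact Set.inter_empty S
  | insert i s hi ih =>
    rw [Finset.set_biUnion_insert, Finset.prod_insert hi]
    have hs : ∀ j ∈ s, (Λ j).Finite := fun j hj => hΛ j (Finset.mem_insert_of_mem hj)
    exact (ncard_compatConfigs_union_le (hΛ i (Finset.mem_insert_self i s))
      (s.finite_toSet.biUnion hs)).trans (Nat.mul_le_mul_left _ (ih hs))

lemma exists_tile_index {n x : ℤ} (q : ℕ) (hx : 0 < x) (hxq : x ≤ q * n) :
    ∃ a : ℕ, a < q ∧ a * n < x ∧ x ≤ a * n + n := by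
  induction q with
  | zero => simp at hxq; omega
  | succ q ih =>
    by_cases h : x ≤ q * n
    · obtain ⟨a, ha, h⟩ := ih h
      exact ⟨a, by omega, h⟩
    · exact ⟨q, by omega, by push_cast at hxq ⊢; constructor <;> linarith⟩

lemma mem_vadd_rect {t p : ℤ × ℤ} {n m : ℤ} :
    p ∈ t +ᵥ Rect n m ↔ t.1 < p.1 ∧ p.1 ≤ t.1 + n ∧ t.2 < p.2 ∧ p.2 ≤ t.2 + m := by
  rw [Set.mem_vadd_set_iff_neg_vadd_mem]
  simp only [Rect, Box, Set.mem_ofPred_eq, vadd_eq_add, Prod.fst_add, Prod.snd_add,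
    Prod.fst_neg, Prod.snd_neg]
  omega

lemma rect_subset_biUnion_vadd {n j : ℤ} {q : ℕ} (hj : j ≤ q * n) :
    Rect j j ⊆
      ⋃ ab ∈ Finset.range q ×ˢ Finset.range q, ((ab.1 : ℤ) * n, (ab.2 : ℤ) * n) +ᵥ Rect n n := by
  rintro ⟨x, y⟩ ⟨hx₁, hx₂, hy₁, hy₂⟩
  obtain ⟨a, ha, hxa⟩ := exists_tile_index q hx₁ (hx₂.trans hj)
  obtain ⟨b, hb, hyb⟩ := exists_tile_index q hy₁ (hy₂.trans hj)
  simp only [Set.mem_iUnion]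
  exact ⟨(a, b), by simp [ha, hb], mem_vadd_rect.2 ⟨hxa.1, hxa.2, hyb.1, hyb.2⟩⟩

lemma ncard_compatConfigs_rect_le_pow {n j : ℤ} {q : ℕ} (hj : j ≤ q * n) :
    (CompatConfigs (Rect j j)).ncard ≤ (CompatConfigs (Rect n n)).ncard ^ (q * q) := by
  calc (CompatConfigs (Rect j j)).ncard
      ≤ (CompatConfigs (⋃ ab ∈ Finset.range q ×ˢ Finset.range q,
          ((ab.1 : ℤ) * n, (ab.2 : ℤ) * n) +ᵥ Rect n n)).ncard :=
        ncard_compatConfigs_mono (rect_subset_biUnion_vadd hj)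
          ((Finset.finite_toSet _).biUnion fun _ _ => (rect_finite n n).vadd_set)
    _ ≤ ∏ ab ∈ Finset.range q ×ˢ Finset.range q,
          (CompatConfigs (((ab.1 : ℤ) * n, (ab.2 : ℤ) * n) +ᵥ Rect n n)).ncard :=
        ncard_compatConfigs_biUnion_le _ fun _ _ => (rect_finite n n).vadd_set
    _ = (CompatConfigs (Rect n n)).ncard ^ (q * q) := by
        simp [compatConfigs_vadd, Set.ncard_vadd_set]

lemma IsMaxConfig.inter_eq_of_subset {Λ S T : Set (ℤ × ℤ)} (hT : IsMaxConfig Λ T)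
    (hS : IsIndependent S) (hTS : T ⊆ S) : S ∩ Λ = T := by
  refine Set.Subset.antisymm (fun u ⟨huS, huΛ⟩ => ?_) (Set.subset_inter hTS hT.1)
  by_contra huT
  obtain ⟨v, hvT, huv⟩ := hT.2.2 u ⟨huΛ, huT⟩
  exact hS u huS v (hTS hvT) huv

lemma exists_isMIS_inter_eq {ι : Type*} {Λ T : ι → Set (ℤ × ℤ)}
    (hsep : Pairwise fun i j => ∀ u ∈ Λ i, ∀ v ∈ Λ j, ¬ TriAdj u v)
    (hT : ∀ i, IsMaxConfig (Λ i) (T i)) :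
    ∃ S, IsMIS S ∧ ∀ i, S ∩ Λ i = T i := by
  have hU : IsIndependent (⋃ i, T i) := by
    simp only [IsIndependent, Set.mem_iUnion]
    rintro u ⟨i, hu⟩ v ⟨j, hv⟩
    obtain rfl | hij := eq_or_ne i j
    · exact (hT i).2.1 u hu v hv
    · exact hsep hij u ((hT i).1 hu) v ((hT j).1 hv)
  obtain ⟨S, hUS, hS⟩ := hU.exists_isMIS_superset
  exact ⟨S, hS, fun i => (hT i).inter_eq_of_subset hS.1 ((Set.subset_iUnion T i).trans hUS)⟩

lemma prod_ncard_maxConfigs_le {ι : Type*} [Fintype ι] {Λ : ι → Set (ℤ × ℤ)}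
    {Λ' : Set (ℤ × ℤ)} (hΛ' : Λ'.Finite) (hsub : ∀ i, Λ i ⊆ Λ')
    (hsep : Pairwise fun i j => ∀ u ∈ Λ i, ∀ v ∈ Λ j, ¬ TriAdj u v) :
    ∏ i, (MaxConfigs (Λ i)).ncard ≤ (CompatConfigs Λ').ncard := by
  have := (compatConfigs_finite hΛ').to_subtype
  choose S hS hST using fun T : (∀ i, MaxConfigs (Λ i)) =>
    exists_isMIS_inter_eq hsep fun i => (T i).2
  let glue (T : ∀ i, MaxConfigs (Λ i)) : CompatConfigs Λ' := ⟨S T ∩ Λ', S T, hS T, rfl⟩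
  have hglue : Function.Injective glue := by
    intro T T' h
    funext i
    have := congrArg (fun R : CompatConfigs Λ' => (R : Set (ℤ × ℤ)) ∩ Λ i) h
    simp only [glue, Set.inter_assoc, Set.inter_eq_right.2 (hsub i), hST] at this
    exact Subtype.ext this
  simpa only [Nat.card_pi, Nat.card_coe_set_eq] using Nat.card_le_card_of_injective glue hglue

lemma tile_separated {a a' : ℕ} {n x y : ℤ} (h : a ≠ a')
    (hx : a * (n + 1) < x ∧ x ≤ a * (n + 1) + n) (hy : a' * (n + 1) < y ∧ y ≤ a' * (n + 1) + n) :
    x + 1 < y ∨ y + 1 < x := by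
  rcases h.lt_or_gt with h | h
  · have : ((a : ℤ) + 1) * (n + 1) ≤ a' * (n + 1) :=
      mul_le_mul_of_nonneg_right (by exact_mod_cast h) (by linarith)
    left; linarith
  · have : ((a' : ℤ) + 1) * (n + 1) ≤ a * (n + 1) :=
      mul_le_mul_of_nonneg_right (by exact_mod_cast h) (by linarith)
    right; linarith

lemma tile_coord_mem_Ioc {a p k : ℕ} {n x : ℤ} (ha : a < p) (hp : p * (n + 1) ≤ k)
    (hx : a * (n + 1) < x ∧ x ≤ a * (n + 1) + n) : x ∈ Set.Ioc 0 (k : ℤ) := by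
  have : ((a : ℤ) + 1) * (n + 1) ≤ p * (n + 1) :=
    mul_le_mul_of_nonneg_right (by exact_mod_cast ha) (by nlinarith)
  constructor <;> nlinarith

/-- Translates of `Λ_{n,m}` on a grid of stride `(n + 1, m + 1)` are pairwise non-adjacent. -/
lemma ncard_maxConfigs_rect_pow_le {n m : ℤ} {p q k : ℕ} (hp : p * (n + 1) ≤ k)
    (hq : q * (m + 1) ≤ k) :
    (MaxConfigs (Rect n m)).ncard ^ (p * q) ≤ (CompatConfigs (Rect k k)).ncard := by
  let tile (ab : Fin p × Fin q) : Set (ℤ × ℤ) :=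
    (((ab.1 : ℕ) : ℤ) * (n + 1), ((ab.2 : ℕ) : ℤ) * (m + 1)) +ᵥ Rect n m
  have hsub : ∀ ab, tile ab ⊆ Rect k k := by
    intro ab u hu
    obtain ⟨hu₁, hu₂, hu₃, hu₄⟩ := mem_vadd_rect.1 hu
    obtain ⟨h₁, h₂⟩ := tile_coord_mem_Ioc ab.1.2 hp ⟨hu₁, hu₂⟩
    obtain ⟨h₃, h₄⟩ := tile_coord_mem_Ioc ab.2.2 hq ⟨hu₃, hu₄⟩
    exact ⟨h₁, h₂, h₃, h₄⟩
  have hsep : Pairwise fun ab ab' => ∀ u ∈ tile ab, ∀ v ∈ tile ab', ¬ TriAdj u v := by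
    intro ab ab' hne u hu v hv huv
    obtain ⟨hu₁, hu₂, hu₃, hu₄⟩ := mem_vadd_rect.1 hu
    obtain ⟨hv₁, hv₂, hv₃, hv₄⟩ := mem_vadd_rect.1 hv
    have hclose := huv.coord_close
    have : (ab.1 : ℕ) ≠ ab'.1 ∨ (ab.2 : ℕ) ≠ ab'.2 := by
      by_contra! h
      exact hne (Prod.ext (Fin.ext h.1) (Fin.ext h.2))
    rcases this with h | h
    · have := tile_separated h ⟨hu₁, hu₂⟩ ⟨hv₁, hv₂⟩; omega
    · have := tile_separated h ⟨hu₃, hu₄⟩ ⟨hv₃, hv₄⟩; omega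
  calc (MaxConfigs (Rect n m)).ncard ^ (p * q) = ∏ ab, (MaxConfigs (tile ab)).ncard := by
        simp [tile, maxConfigs_vadd, Set.ncard_vadd_set]
    _ ≤ (CompatConfigs (Rect k k)).ncard :=
        prod_ncard_maxConfigs_le (rect_finite k k) hsub hsep

/-- The hypothesis says `limsup u ≤ u n` for every `n ≥ 1`. -/
lemma tendsto_iInf_succ_of_forall_eventually_le {u : ℕ → ℝ} (hbdd : BddBelow (Set.range u))
    (hup : ∀ n, ∃ v : ℕ → ℝ, Tendsto v atTop (𝓝 (u (n + 1))) ∧ ∀ᶠ j in atTop, u j ≤ v j) :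
    Tendsto u atTop (𝓝 (⨅ n, u (n + 1))) := by
  have hbdd' : BddBelow (Set.range fun n => u (n + 1)) :=
    hbdd.mono (Set.range_comp_subset_range (· + 1) u)
  refine tendsto_order.2 ⟨fun b hb => ?_, fun b hb => ?_⟩
  · filter_upwards [eventually_ge_atTop 1] with j hj
    obtain ⟨n, rfl⟩ := Nat.exists_eq_add_of_le' hj
    exact hb.trans_le (ciInf_le hbdd' n)
  · obtain ⟨n, hn⟩ := exists_lt_of_ciInf_lt hb
    obtain ⟨v, hv, huv⟩ := hup n
    filter_upwards [huv, hv.eventually (gt_mem_nhds hn)] with j h₁ h₂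
    exact h₁.trans_lt h₂

lemma ncard_compatConfigs_rect_pos (n m : ℤ) : 0 < (CompatConfigs (Rect n m)).ncard :=
  (Set.ncard_pos (compatConfigs_finite (rect_finite n m))).2 (compatConfigs_nonempty _)

lemma ncard_maxConfigs_rect_pos (n m : ℤ) : 0 < (MaxConfigs (Rect n m)).ncard :=
  (Set.ncard_pos (maxConfigs_finite (rect_finite n m))).2 (maxConfigs_nonempty _)

lemma logb_le_mul_logb_of_le_pow {x y e : ℕ} (hx : 0 < x) (h : x ≤ y ^ e) :
    Real.logb 2 x ≤ e * Real.logb 2 y := by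
  rw [← Real.logb_pow]
  exact Real.logb_le_logb_of_le one_lt_two (by exact_mod_cast hx) (by exact_mod_cast h)

lemma mul_logb_le_logb_of_pow_le {x y e : ℕ} (hy : 0 < y) (h : y ^ e ≤ x) :
    e * Real.logb 2 y ≤ Real.logb 2 x := by
  rw [← Real.logb_pow]
  exact Real.logb_le_logb_of_le one_lt_two (by positivity) (by exact_mod_cast h)

noncomputable def squareEntropy (k : ℕ) : ℝ :=
  Real.logb 2 ((CompatConfigs (Rect (k : ℤ) (k : ℤ))).ncard) / (k : ℝ) ^ 2

lemma squareEntropy_nonneg (k : ℕ) : 0 ≤ squareEntropy k :=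
  div_nonneg (Real.logb_nonneg one_lt_two (by exact_mod_cast ncard_compatConfigs_rect_pos _ _))
    (sq_nonneg _)

lemma squareEntropy_le {n j : ℕ} (hn : 0 < n) (hj : 0 < j) :
    squareEntropy j ≤ (1 + n / j) ^ 2 * squareEntropy n := by
  set q := j / n + 1
  have hjq : j ≤ q * n := by
    have := Nat.lt_div_mul_add (a := j) hn
    simp only [q, add_mul, one_mul]; omega
  have hqn : ((q * n : ℕ) : ℝ) ≤ j + n := by
    have := Nat.div_mul_le_self j n
    exact_mod_cast (show q * n ≤ j + n by simp only [q, add_mul, one_mul]; omega)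
  have hcount := ncard_compatConfigs_rect_le_pow (n := n) (j := j) (q := q) (by exact_mod_cast hjq)
  have hlog := logb_le_mul_logb_of_le_pow (ncard_compatConfigs_rect_pos _ _) hcount
  have hj' : (0 : ℝ) < j := by exact_mod_cast hj
  calc squareEntropy j
      ≤ ((q * q : ℕ) : ℝ) * Real.logb 2 ((CompatConfigs (Rect n n)).ncard) / j ^ 2 :=
        div_le_div_of_nonneg_right hlog (sq_nonneg _)
    _ = (((q * n : ℕ) : ℝ) / j) ^ 2 * squareEntropy n := by
        simp only [squareEntropy]; push_cast; field_simp
    _ ≤ ((j + n) / j) ^ 2 * squareEntropy n := by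
        gcongr
        exact squareEntropy_nonneg n
    _ = (1 + n / j) ^ 2 * squareEntropy n := by
        rw [add_div, div_self hj'.ne']

/-- The infimum skips `k = 0`, where `squareEntropy 0 = log₂ 1 / 0 = 0` is a junk value. -/
lemma tendsto_squareEntropy :
    Tendsto squareEntropy atTop (𝓝 (⨅ n, squareEntropy (n + 1))) := by
  refine tendsto_iInf_succ_of_forall_eventually_le
    ⟨0, Set.forall_mem_range.2 squareEntropy_nonneg⟩
    fun n => ⟨fun j => (1 + ((n + 1 : ℕ) : ℝ) / j) ^ 2 * squareEntropy (n + 1), ?_, ?_⟩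
  · simpa using ((tendsto_const_div_atTop_nhds_zero_nat ((n + 1 : ℕ) : ℝ)).const_add 1).pow 2
      |>.mul_const (squareEntropy (n + 1))
  · filter_upwards [eventually_gt_atTop 0] with j hj
    exact squareEntropy_le n.succ_pos hj

lemma div_le_of_tendsto_squareEntropy {H : ℝ} (hH : Tendsto squareEntropy atTop (𝓝 H))
    (n m : ℕ) :
    Real.logb 2 ((MaxConfigs (Rect n m)).ncard) / (((n : ℝ) + 1) * ((m : ℝ) + 1)) ≤ H := by
  let k (t : ℕ) : ℕ := t * (n + 1) * (m + 1)
  have hk : Tendsto k atTop atTop :=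
    tendsto_atTop_mono (fun t => Nat.le_mul_of_pos_right _ (by positivity) |>.trans
      (Nat.le_mul_of_pos_right _ (by positivity))) tendsto_id
  refine ge_of_tendsto (hH.comp hk) ?_
  filter_upwards [eventually_gt_atTop 0] with t ht
  have hpack := ncard_maxConfigs_rect_pow_le (n := n) (m := m) (p := t * (m + 1))
    (q := t * (n + 1)) (k := k t) (by push_cast [k]; linarith) (by push_cast [k]; linarith)
  have hlog := mul_logb_le_logb_of_pow_le (ncard_maxConfigs_rect_pos _ _) hpack
  have ht' : (0 : ℝ) < t := by exact_mod_cast ht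
  calc Real.logb 2 ((MaxConfigs (Rect n m)).ncard) / (((n : ℝ) + 1) * ((m : ℝ) + 1))
      = ((t * (m + 1) * (t * (n + 1)) : ℕ) : ℝ) * Real.logb 2 ((MaxConfigs (Rect n m)).ncard)
          / ((k t : ℕ) : ℝ) ^ 2 := by
        push_cast [k]; field_simp
    _ ≤ squareEntropy (k t) := div_le_div_of_nonneg_right hlog (sq_nonneg _)

/-- The topological entropy `H₀ = lim_k (log₂ |X_{Λ_k}|)/k²` of `X(𝔸)` exists,
and it dominates the block lower bounds `(log₂ |M_{Λ_{n,m}}|)/((n+1)(m+1))`. -/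
theorem topological_entropy_exists :
    ∃ H₀ : ℝ,
      Filter.Tendsto
        (fun k : ℕ =>
          Real.logb 2 ((CompatConfigs (Rect (k : ℤ) (k : ℤ))).ncard) / (k : ℝ) ^ 2)
        Filter.atTop (nhds H₀) ∧
      ∀ n m : ℤ, 1 ≤ n → 1 ≤ m →
        Real.logb 2 ((MaxConfigs (Rect n m)).ncard) / (((n : ℝ) + 1) * ((m : ℝ) + 1)) ≤ H₀ := by
  refine ⟨_, tendsto_squareEntropy, fun n m hn hm => ?_⟩
  lift n to ℕ using by omega
  lift m to ℕ using by omega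
  exact_mod_cast div_le_of_tendsto_squareEntropy tendsto_squareEntropy n m
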